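/- For permutations σ < π in the classical permutation pattern order, with σ of length m and π of length n, μ(σ,π) = (−1)^{n−m} · NE(σ,π) + Σ_{λ : σ ≤ λ < π} μ(σ,λ) · μ(0̂,1̂), where the second factor in each summand is the Möbius function of the bounded poset R̂*(λ,π), and the sum is over all permutations λ with σ ≤ λ ≤ π and λ ≠ π. -/

import Mathlib

attribute [local instance] Classical.propDecidable

noncomputable instance {α : Type*} [Fintype α] : Fintype (WithBot α) :=
  inferInstanceAs (Fintype (Option α))
noncomputable instance {α : Type*} [Fintype α] : Fintype (WithTop α) :=
  inferInstanceAs (Fintype (Option α))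

/-- The Möbius function of a finite partial order. -/
noncomputable def mob {α : Type*} [Preorder α] [Fintype α] (a b : α) : ℤ :=
  letI := Classical.decEq α
  letI : @DecidableRel α α (· ≤ ·) := Classical.decRel _
  letI : @DecidableRel α α (· < ·) := Classical.decRel _
  letI : LocallyFiniteOrder α := Fintype.toLocallyFiniteOrder
  IncidenceAlgebra.mu ℤ a b

/-- The bounded poset obtained by adjoining a new minimum `0̂` and maximum `1̂`. -/
abbrev Bd (α : Type*) := WithBot (WithTop α)

/-- The Möbius number `μ(0̂,1̂)` of a finite poset with a new minimum and maximum adjoined. -/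
noncomputable def mobHat (α : Type*) [Preorder α] [Fintype α] : ℤ :=
  mob (⊥ : Bd α) ⊤

/-- Classical pattern containment for (reduced) permutations. -/
def PermLE {m n : ℕ} (σ : Equiv.Perm (Fin m)) (π : Equiv.Perm (Fin n)) : Prop :=
  ∃ f : Fin m → Fin n, StrictMono f ∧ ∀ i j : Fin m, σ i < σ j ↔ π (f i) < π (f j)

/-- Strict classical pattern containment. -/
def PermLT {m n : ℕ} (σ : Equiv.Perm (Fin m)) (π : Equiv.Perm (Fin n)) : Prop :=
  PermLE σ π ∧ ¬ PermLE π σ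

/-- `red π S` is the permutation of length `S.card` order-isomorphic to `π`
restricted to the set of positions `S`. -/
noncomputable def red {n : ℕ} (π : Equiv.Perm (Fin n)) (S : Finset (Fin n)) :
    Equiv.Perm (Fin S.card) := by
  classical
  have hcard : (S.image fun x => π x).card = S.card :=
    Finset.card_image_of_injective _ π.injective
  refine Equiv.ofBijective (fun i =>
    ((S.image fun x => π x).orderIsoOfFin hcard).symm
      ⟨π (S.orderIsoOfFin rfl i), Finset.mem_image_of_mem _ (S.orderIsoOfFin rfl i).2⟩)
    (Finite.injective_iff_bijective.mp ?_)
  intro i j hij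
  have h2 := congrArg (fun z => ((((S.image fun x => π x).orderIsoOfFin hcard) z : Fin n)))
    hij
  simp only [OrderIso.apply_symm_apply] at h2
  have h4 := π.injective h2
  have h5 : (S.orderIsoOfFin rfl) i = (S.orderIsoOfFin rfl) j := Subtype.ext h4
  exact (S.orderIsoOfFin rfl).injective h5

/-- `S` is an embedding (occurrence set) of `σ` in `π`, i.e. `red(π|_S) = σ`. -/
def IsEmb {n m : ℕ} (π : Equiv.Perm (Fin n)) (S : Finset (Fin n))
    (σ : Equiv.Perm (Fin m)) : Prop :=
  ∃ h : S.card = m, ∀ i : Fin S.card, (red π S i : ℕ) = (σ (Fin.cast h i) : ℕ)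

/-- `E(σ,π)`: the number of embeddings of `σ` in `π`. -/
noncomputable def permE {m n : ℕ} (σ : Equiv.Perm (Fin m)) (π : Equiv.Perm (Fin n)) : ℕ :=
  (Finset.univ.filter fun S : Finset (Fin n) => IsEmb π S σ).card

/-- The poset `A*(λ,π)` of proper position sets `S ⊊ Fin n` with `λ ≤ red(π|_S)`,
ordered by inclusion. -/
abbrev AstarP {n k : ℕ} (π : Equiv.Perm (Fin n)) (lam : Equiv.Perm (Fin k)) :=
  {S : Finset (Fin n) // S ≠ Finset.univ ∧ PermLE lam (red π S)}

/-- The predecessor position. -/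
def predPos {n : ℕ} (p : Fin n) : Fin n :=
  ⟨p.1 - 1, lt_of_le_of_lt (Nat.sub_le p.1 1) p.2⟩

/-- `p` lies in the tail of an adjacency of `π`: `p` is not the first position and the
values of `π` at `p−1` and `p` differ by exactly one (consecutive positions in a maximal
block on which the values increase by exactly 1 at each step or decrease by exactly 1 at
each step). -/
def tailPos {n : ℕ} (π : Equiv.Perm (Fin n)) (p : Fin n) : Prop :=
  0 < p.1 ∧ ((π p : ℕ) = (π (predPos p) : ℕ) + 1 ∨ (π (predPos p) : ℕ) = (π p : ℕ) + 1)

/-- A normal embedding: an embedding containing every position in the tail of an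
adjacency of `π`. -/
def IsNormalEmb {n m : ℕ} (π : Equiv.Perm (Fin n)) (S : Finset (Fin n))
    (σ : Equiv.Perm (Fin m)) : Prop :=
  IsEmb π S σ ∧ ∀ p : Fin n, tailPos π p → p ∈ S

/-- `NE(σ,π)`: the number of normal embeddings of `σ` in `π`. -/
noncomputable def permNE {m n : ℕ} (σ : Equiv.Perm (Fin m)) (π : Equiv.Perm (Fin n)) : ℕ :=
  (Finset.univ.filter fun S : Finset (Fin n) => IsNormalEmb π S σ).card

/-- A set of positions is representative if within every adjacency of `π` its positions
form a suffix of the adjacency. -/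
def ReprP {n : ℕ} (π : Equiv.Perm (Fin n)) (S : Finset (Fin n)) : Prop :=
  ∀ p : Fin n, tailPos π p → predPos p ∈ S → p ∈ S

/-- The poset `R*(λ,π)` of representative proper position sets `S ⊊ Fin n` with
`λ ≤ red(π|_S)`, ordered by inclusion. -/
abbrev RstarP {n k : ℕ} (π : Equiv.Perm (Fin n)) (lam : Equiv.Perm (Fin k)) :=
  {S : Finset (Fin n) // S ≠ Finset.univ ∧ ReprP π S ∧ PermLE lam (red π S)}

/-!
Write `g_λ(S)` for `μ(0̂, S)` in `R̂*(λ,π)` (zero if `S ∉ R*(λ,π)`) and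
`G(S) = ∑_{σ ≤ λ ≤ π} μ(σ,λ) g_λ(S)`. For a proper representative `S`, the Möbius recursion
in `R̂*(λ,π)` gives `∑_{T ⊆ S} g_λ(T) = -[λ ≤ red(π|_S)]`, and then the recursion for `μ(σ,·)`
gives `∑_{T ⊆ S} G(T) = -[S is an embedding of σ]`. Now `G` lives on proper representative
sets `T`, and for each of them the sum of `(-1)^(n-|S|)` over the proper sets `S` containing `T`
and all adjacency tails is `-1`. Inverting, `∑_T G(T) = (-1)^(n-m) NE(σ,π)`.
As `μ(0̂,1̂) + 1 = -∑_S g_λ(S)`, this reads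
`∑_{σ ≤ λ ≤ π} μ(σ,λ) (μ(0̂,1̂ in R̂*(λ,π)) + 1) = -(-1)^(n-m) NE(σ,π)`; the summand `λ = π`
vanishes because `R*(π,π)` is empty, and `∑_{σ ≤ λ < π} μ(σ,λ) = -μ(σ,π)`.
-/

open Finset

section PatternOrder

variable {a b c : ℕ}

lemma Equiv.Perm.eq_of_lt_iff_lt {σ τ : Equiv.Perm (Fin a)}
    (h : ∀ i j, σ i < σ j ↔ τ i < τ j) : σ = τ := by
  have hmono : StrictMono fun x => τ (σ.symm x) := fun x y hxy =>
    (h (σ.symm x) (σ.symm y)).1 (by simpa using hxy)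
  ext i
  simpa using congrArg Fin.val (hmono.apply_eq (x := σ i)).symm

lemma permLE_refl (σ : Equiv.Perm (Fin a)) : PermLE σ σ :=
  ⟨id, strictMono_id, fun _ _ => Iff.rfl⟩

lemma PermLE.trans {σ : Equiv.Perm (Fin a)} {τ : Equiv.Perm (Fin b)}
    {ρ : Equiv.Perm (Fin c)} (h₁ : PermLE σ τ) (h₂ : PermLE τ ρ) : PermLE σ ρ := by
  obtain ⟨f, hf, hfσ⟩ := h₁
  obtain ⟨g, hg, hgτ⟩ := h₂
  exact ⟨g ∘ f, hg.comp hf, fun i j => (hfσ i j).trans (hgτ (f i) (f j))⟩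

lemma PermLE.card_le {σ : Equiv.Perm (Fin a)} {τ : Equiv.Perm (Fin b)}
    (h : PermLE σ τ) : a ≤ b := by
  obtain ⟨f, hf, -⟩ := h
  simpa using Fintype.card_le_of_injective f hf.injective

lemma PermLE.eq {σ τ : Equiv.Perm (Fin a)} (h : PermLE σ τ) : σ = τ := by
  obtain ⟨f, hf, hfσ⟩ := h
  obtain rfl : f = id := hf.eq_id
  exact Equiv.Perm.eq_of_lt_iff_lt hfσ

lemma PermLT.card_lt {σ : Equiv.Perm (Fin a)} {τ : Equiv.Perm (Fin b)}
    (h : PermLT σ τ) : a < b := by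
  obtain ⟨hle, hnot⟩ := h
  rcases hle.card_le.lt_or_eq with hlt | rfl
  · exact hlt
  · exact absurd (hle.eq ▸ permLE_refl σ) hnot

lemma permLE_and_permLE_iff {σ : Equiv.Perm (Fin a)} {τ : Equiv.Perm (Fin b)} :
    PermLE σ τ ∧ PermLE τ σ ↔ ∃ h : a = b, ∀ i, (σ i : ℕ) = τ (Fin.cast h i) := by
  constructor
  · rintro ⟨hστ, hτσ⟩
    obtain rfl := hστ.card_le.antisymm hτσ.card_le
    exact ⟨rfl, fun i => by rw [hστ.eq, Fin.cast_eq_self]⟩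
  · rintro ⟨rfl, h⟩
    obtain rfl : σ = τ := Equiv.ext fun i => Fin.ext (by simpa using h i)
    exact ⟨permLE_refl σ, permLE_refl σ⟩

lemma isEmb_iff {n m : ℕ} {π : Equiv.Perm (Fin n)} {T : Finset (Fin n)}
    {σ : Equiv.Perm (Fin m)} : IsEmb π T σ ↔ PermLE (red π T) σ ∧ PermLE σ (red π T) :=
  permLE_and_permLE_iff.symm

end PatternOrder

section Red

variable {n : ℕ} (π : Equiv.Perm (Fin n))

lemma red_lt_red_iff (S : Finset (Fin n)) (i j : Fin S.card) :
    red π S i < red π S j ↔ π (S.orderIsoOfFin rfl i) < π (S.orderIsoOfFin rfl j) := by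
  unfold red
  rw [Equiv.ofBijective_apply, Equiv.ofBijective_apply, OrderIso.lt_symm_apply,
    OrderIso.apply_symm_apply]
  exact Subtype.mk_lt_mk

lemma red_permLE (S : Finset (Fin n)) : PermLE (red π S) π :=
  ⟨fun i => S.orderIsoOfFin rfl i, fun _ _ hij => (S.orderIsoOfFin rfl).strictMono hij,
    red_lt_red_iff π S⟩

lemma red_mono {S T : Finset (Fin n)} (hST : S ⊆ T) : PermLE (red π S) (red π T) := by
  let incl (i : Fin S.card) : Fin T.card :=
    (T.orderIsoOfFin rfl).symm ⟨S.orderIsoOfFin rfl i, hST (S.orderIsoOfFin rfl i).2⟩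
  refine ⟨incl, fun i j hij => ?_, fun i j => ?_⟩
  · exact (T.orderIsoOfFin rfl).symm.strictMono ((S.orderIsoOfFin rfl).strictMono hij)
  · simp only [red_lt_red_iff, incl, OrderIso.apply_symm_apply]

end Red

lemma sum_range_sum_ite_heq {n : ℕ} (π : Equiv.Perm (Fin n))
    (g : (k : ℕ) → Equiv.Perm (Fin k) → ℤ) :
    ∑ k ∈ range (n + 1), ∑ lam : Equiv.Perm (Fin k),
      (if k = n ∧ HEq lam π then g k lam else 0) = g n π := by
  rw [sum_eq_single_of_mem n (self_mem_range_succ n) fun k _ hk => by simp [hk]]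
  simp

structure IsMobiusFrom {m : ℕ} (σ : Equiv.Perm (Fin m))
    (f : (k : ℕ) → Equiv.Perm (Fin k) → ℤ) : Prop where
  apply_self : f m σ = 1
  sum_interval : ∀ {b : ℕ} (ρ : Equiv.Perm (Fin b)), PermLT σ ρ →
    ∑ k ∈ range (b + 1), ∑ lam : Equiv.Perm (Fin k),
      (if PermLE σ lam ∧ PermLE lam ρ then f k lam else 0) = 0

lemma sum_interval_eq_ite {m b N : ℕ} {σ : Equiv.Perm (Fin m)}
    {f : (k : ℕ) → Equiv.Perm (Fin k) → ℤ} (hf : IsMobiusFrom σ f) (ρ : Equiv.Perm (Fin b))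
    (hbN : b ≤ N) :
    ∑ k ∈ range (N + 1), ∑ lam : Equiv.Perm (Fin k),
      (if PermLE σ lam ∧ PermLE lam ρ then f k lam else 0) =
      if PermLE ρ σ ∧ PermLE σ ρ then 1 else 0 := by
  by_cases hσρ : PermLE σ ρ
  swap
  · rw [if_neg fun h => hσρ h.2]
    refine sum_eq_zero fun k _ => sum_eq_zero fun lam _ => if_neg ?_
    exact fun h => hσρ (h.1.trans h.2)
  by_cases hρσ : PermLE ρ σ
  · have hmN : m ≤ N := hσρ.card_le.trans hbN
    rw [if_pos ⟨hρσ, hσρ⟩, sum_eq_single_of_mem m (mem_range.2 (by omega)),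
      sum_eq_single σ, if_pos ⟨permLE_refl σ, hσρ⟩, hf.apply_self]
    · exact fun lam _ hne => if_neg fun h => hne h.1.eq.symm
    · simp
    · refine fun k _ hkm => sum_eq_zero fun lam _ => if_neg fun h => hkm ?_
      exact h.1.card_le.antisymm' (h.2.trans hρσ).card_le
  · rw [if_neg fun h => hρσ h.1]
    refine .trans (.symm ?_) (hf.sum_interval ρ ⟨hσρ, hρσ⟩)
    apply sum_subset (range_subset_range.2 (by omega))
    intro k _ hk
    refine sum_eq_zero fun lam _ => if_neg fun h => hk (mem_range.2 ?_)
    exact Nat.lt_succ_of_le h.2.card_le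

section Mobius

variable {α : Type*} [PartialOrder α] [Fintype α]

lemma mob_self (a : α) : mob a a = 1 := by
  let := Classical.decEq α
  let : @DecidableRel α α (· ≤ ·) := Classical.decRel _
  let : @DecidableRel α α (· < ·) := Classical.decRel _
  let : LocallyFiniteOrder α := Fintype.toLocallyFiniteOrder
  exact IncidenceAlgebra.mu_self a

lemma sum_mob_Icc (a b : α) :
    ∑ x with a ≤ x ∧ x ≤ b, mob a x = if a = b then 1 else 0 := by
  let := Classical.decEq α
  let : @DecidableRel α α (· ≤ ·) := Classical.decRel _
  let : @DecidableRel α α (· < ·) := Classical.decRel _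
  let : LocallyFiniteOrder α := Fintype.toLocallyFiniteOrder
  convert IncidenceAlgebra.sum_Icc_mu_right (𝕜 := ℤ) a b using 2
  · ext x
    simp
  · rfl

end Mobius

lemma sum_bd {β : Type*} [Fintype β] (f : Bd β → ℤ) :
    ∑ x, f x = f ⊥ + f ⊤ + ∑ b : β, f ↑(b : WithTop β) := by
  rw [add_assoc]
  exact (Fintype.sum_option f).trans (congrArg _ (Fintype.sum_option _))

section BoundedMobius

variable {β : Type*} [PartialOrder β] [Fintype β]

lemma mobHat_eq : mobHat β = -1 - ∑ b : β, mob (⊥ : Bd β) ↑(b : WithTop β) := by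
  have h := sum_mob_Icc (⊥ : Bd β) ⊤
  simp only [bot_le, le_top, and_self, filter_true, sum_bd, mob_self] at h
  rw [if_neg bot_ne_top] at h
  unfold mobHat
  linarith

lemma mobHat_of_isEmpty [IsEmpty β] : mobHat β = -1 := by
  simp [mobHat_eq]

lemma sum_mob_bot_coe_le (b : β) :
    ∑ c with c ≤ b, mob (⊥ : Bd β) ↑(c : WithTop β) = -1 := by
  have h := sum_mob_Icc (⊥ : Bd β) ↑(b : WithTop β)
  simp only [bot_le, true_and, sum_filter, sum_bd, mob_self] at h
  simp only [top_le_iff, WithBot.coe_eq_top, WithTop.coe_ne_top, WithBot.coe_le_coe,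
    WithTop.coe_le_coe, WithBot.bot_ne_coe, if_false, if_true, add_zero] at h
  rw [sum_filter]
  linarith

end BoundedMobius

section MobBotOn

variable {α : Type*} [PartialOrder α] [Fintype α]

noncomputable def mobBotOn (p : α → Prop) [DecidablePred p] (x : α) : ℤ :=
  if hx : p x then mob (⊥ : Bd {y // p y}) ↑((⟨x, hx⟩ : {y // p y}) : WithTop {y // p y})
  else 0

lemma sum_filter_mobBotOn (p q : α → Prop) [DecidablePred p] :
    ∑ x with q x, mobBotOn p x =
      ∑ c : {y // p y} with q c.1, mob (⊥ : Bd {y // p y}) ↑(c : WithTop {y // p y}) := by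
  rw [sum_filter, sum_filter]
  refine (Fintype.sum_of_injective Subtype.val Subtype.val_injective _ _ ?_ ?_).symm
  · intro x hx
    rw [mobBotOn, dif_neg fun hpx => hx ⟨⟨x, hpx⟩, rfl⟩, ite_self]
  · intro c
    rw [mobBotOn, dif_pos c.2]

lemma mobHat_subtype_eq (p : α → Prop) [DecidablePred p] :
    mobHat {y // p y} = -1 - ∑ x, mobBotOn p x := by
  have h := sum_filter_mobBotOn p fun _ => True
  simp only [filter_true] at h
  rw [h, mobHat_eq]

lemma sum_filter_le_mobBotOn {p : α → Prop} [DecidablePred p] {x : α} (hx : p x) :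
    ∑ y with y ≤ x, mobBotOn p y = -1 := by
  rw [sum_filter_mobBotOn]
  exact sum_mob_bot_coe_le (⟨x, hx⟩ : {y // p y})

end MobBotOn

section Alternating

variable {α : Type*} [Fintype α] [DecidableEq α]

lemma sum_neg_one_pow_proper_supersets {B : Finset α} (hB : B ≠ univ) :
    ∑ S with B ⊆ S ∧ S ≠ univ, (-1 : ℤ) ^ (Fintype.card α - #S) = -1 := by
  have hsupersets : ∑ S with B ⊆ S, (-1 : ℤ) ^ (Fintype.card α - #S) = 0 := by
    have h := sum_powerset_neg_one_pow_card (x := Bᶜ)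
    rw [if_neg (mt (compl_eq_empty_iff B).1 hB)] at h
    rw [← h]
    refine sum_nbij' compl compl ?_ ?_ ?_ ?_ ?_ <;> simp [card_compl, subset_compl_comm]
  rw [← add_sum_erase _ _ (mem_filter.2 ⟨mem_univ _, subset_univ B⟩)] at hsupersets
  simp only [card_univ, Nat.sub_self, pow_zero] at hsupersets
  convert eq_neg_of_add_eq_zero_right hsupersets using 2
  ext S
  simp [and_comm]

lemma sum_eq_neg_sum_supersets_mul_sum_powerset (B : Finset α) (G : Finset α → ℤ)
    (hG : ∀ T, G T ≠ 0 → B ∪ T ≠ univ) :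
    ∑ T, G T = -∑ S with B ⊆ S ∧ S ≠ univ,
      (-1 : ℤ) ^ (Fintype.card α - #S) * ∑ T ∈ S.powerset, G T := by
  simp_rw [mul_sum]
  rw [sum_comm' (t' := univ) (s' := fun T => {S | B ∪ T ⊆ S ∧ S ≠ univ})
    (by simp [union_subset_iff]; tauto)]
  rw [← sum_neg_distrib]
  refine sum_congr rfl fun T _ => ?_
  by_cases hT : G T = 0
  · simp [hT]
  · rw [← sum_mul, sum_neg_one_pow_proper_supersets (hG T hT), neg_one_mul, neg_neg]

end Alternating

section Adjacency

variable {n : ℕ} {π : Equiv.Perm (Fin n)}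

noncomputable def tailSet (π : Equiv.Perm (Fin n)) : Finset (Fin n) := {p | tailPos π p}

lemma tailSet_subset_iff {S : Finset (Fin n)} :
    tailSet π ⊆ S ↔ ∀ p, tailPos π p → p ∈ S := by
  simp [tailSet, subset_iff]

lemma ReprP.eq_univ_of_tailSet_union {T : Finset (Fin n)} (hT : ReprP π T)
    (h : tailSet π ∪ T = univ) : T = univ := by
  refine eq_univ_of_forall fun p => ?_
  induction p using WellFoundedLT.induction with
  | _ p ih =>
    by_cases htail : tailPos π p
    · exact hT p htail (ih _ (Fin.lt_def.2 (Nat.sub_lt htail.1 one_pos)))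
    · have hp : p ∈ tailSet π ∪ T := h ▸ mem_univ p
      simpa [tailSet, htail] using hp

end Adjacency

section Rstar

variable {n k : ℕ} (π : Equiv.Perm (Fin n)) (lam : Equiv.Perm (Fin k))

noncomputable def rstarMob : Finset (Fin n) → ℤ :=
  mobBotOn fun S => S ≠ univ ∧ ReprP π S ∧ PermLE lam (red π S)

lemma mobHat_rstar_add_one : mobHat (RstarP π lam) + 1 = -∑ S, rstarMob π lam S := by
  rw [mobHat_subtype_eq, rstarMob]
  ring

lemma rstarMob_eq_zero {T : Finset (Fin n)} (hT : ¬(T ≠ univ ∧ ReprP π T)) :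
    rstarMob π lam T = 0 :=
  dif_neg fun h => hT ⟨h.1, h.2.1⟩

variable {π} in
lemma sum_powerset_rstarMob {S : Finset (Fin n)} (hS : S ≠ univ) (hSr : ReprP π S) :
    ∑ T ∈ S.powerset, rstarMob π lam T = if PermLE lam (red π S) then -1 else 0 := by
  split_ifs with hlam
  · rw [← sum_filter_le_mobBotOn (p := fun S => S ≠ univ ∧ ReprP π S ∧ PermLE lam (red π S))
      ⟨hS, hSr, hlam⟩, rstarMob]
    congr 1
    ext T
    simp
  · refine sum_eq_zero fun T hT => dif_neg fun h => hlam ?_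
    exact h.2.2.trans (red_mono π (mem_powerset.1 hT))

lemma mobHat_rstar_self : mobHat (RstarP π π) = -1 := by
  have : IsEmpty (RstarP π π) := ⟨fun ⟨S, hS, _, hπS⟩ =>
    ((card_lt_iff_ne_univ S).2 hS).not_ge (by simpa using hπS.card_le)⟩
  exact mobHat_of_isEmpty

end Rstar

section Weighted

variable {m n : ℕ} (σ : Equiv.Perm (Fin m)) (π : Equiv.Perm (Fin n))
  (f : (k : ℕ) → Equiv.Perm (Fin k) → ℤ)

noncomputable def weightedRstarMob (T : Finset (Fin n)) : ℤ :=
  ∑ k ∈ range (n + 1), ∑ lam : Equiv.Perm (Fin k),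
    (if PermLE σ lam ∧ PermLE lam π then f k lam else 0) * rstarMob π lam T

lemma sum_weightedRstarMob_powerset (hf : IsMobiusFrom σ f) {S : Finset (Fin n)}
    (hS : S ≠ univ) (hSr : ReprP π S) :
    ∑ T ∈ S.powerset, weightedRstarMob σ π f T = -if IsEmb π S σ then 1 else 0 := by
  have hterm (k : ℕ) (lam : Equiv.Perm (Fin k)) :
      ∑ T ∈ S.powerset, (if PermLE σ lam ∧ PermLE lam π then f k lam else 0) * rstarMob π lam T =
        -if PermLE σ lam ∧ PermLE lam (red π S) then f k lam else 0 := by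
    rw [← mul_sum, sum_powerset_rstarMob lam hS hSr]
    by_cases hlam : PermLE lam (red π S)
    · have hlamπ := hlam.trans (red_permLE π S)
      by_cases hσ : PermLE σ lam <;> simp [hσ, hlam, hlamπ]
    · simp [hlam]
  unfold weightedRstarMob
  rw [sum_comm]
  simp_rw [sum_comm (s := S.powerset), hterm, sum_neg_distrib]
  rw [sum_interval_eq_ite hf (red π S) (by simpa using S.card_le_univ)]
  simp only [isEmb_iff]

lemma weightedRstarMob_eq_zero {T : Finset (Fin n)} (hT : ¬(T ≠ univ ∧ ReprP π T)) :
    weightedRstarMob σ π f T = 0 := by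
  simp [weightedRstarMob, rstarMob_eq_zero π _ hT]

lemma sum_weightedRstarMob (hf : IsMobiusFrom σ f) (hmn : m < n) :
    ∑ T, weightedRstarMob σ π f T = (-1) ^ (n - m) * (permNE σ π : ℤ) := by
  have hsupport (T : Finset (Fin n)) (hT : weightedRstarMob σ π f T ≠ 0) :
      tailSet π ∪ T ≠ univ := by
    by_contra h
    obtain ⟨hTu, hTr⟩ := not_not.1 (mt (weightedRstarMob_eq_zero σ π f) hT)
    exact hTu (hTr.eq_univ_of_tailSet_union h)
  have hnormal (S : Finset (Fin n)) : IsNormalEmb π S σ ↔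
      (tailSet π ⊆ S ∧ S ≠ univ) ∧ IsEmb π S σ := by
    rw [IsNormalEmb, tailSet_subset_iff]
    constructor
    · rintro ⟨hemb, htail⟩
      refine ⟨⟨htail, fun hSu => ?_⟩, hemb⟩
      have hcard := hemb.1
      rw [hSu, card_univ, Fintype.card_fin] at hcard
      omega
    · rintro ⟨⟨htail, -⟩, hemb⟩
      exact ⟨hemb, htail⟩
  calc ∑ T, weightedRstarMob σ π f T
      = -∑ S with tailSet π ⊆ S ∧ S ≠ univ, (-1 : ℤ) ^ (Fintype.card (Fin n) - #S) *
          ∑ T ∈ S.powerset, weightedRstarMob σ π f T :=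
        sum_eq_neg_sum_supersets_mul_sum_powerset _ _ hsupport
    _ = ∑ S with tailSet π ⊆ S ∧ S ≠ univ, if IsEmb π S σ then (-1) ^ (n - m) else 0 := by
        rw [← sum_neg_distrib]
        refine sum_congr rfl fun S hS => ?_
        obtain ⟨htail, hSu⟩ := (mem_filter.1 hS).2
        rw [sum_weightedRstarMob_powerset σ π f hf hSu
          fun p hp _ => tailSet_subset_iff.1 htail p hp]
        split_ifs with hemb
        · simp [hemb.1]
        · simp
    _ = (-1) ^ (n - m) * (permNE σ π : ℤ) := by
        rw [sum_ite, sum_const_zero, add_zero, filter_filter, sum_const, nsmul_eq_mul, mul_comm,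
          permNE]
        congr 3
        ext S
        simp [hnormal]

end Weighted

lemma sum_interval_mul_mobHat_rstar_add_one {m n : ℕ} (σ : Equiv.Perm (Fin m))
    (π : Equiv.Perm (Fin n)) {f : (k : ℕ) → Equiv.Perm (Fin k) → ℤ} (hf : IsMobiusFrom σ f)
    (hmn : m < n) :
    ∑ k ∈ range (n + 1), ∑ lam : Equiv.Perm (Fin k),
      (if PermLE σ lam ∧ PermLE lam π then f k lam else 0) * (mobHat (RstarP π lam) + 1) =
      -((-1) ^ (n - m) * (permNE σ π : ℤ)) := by
  simp_rw [mobHat_rstar_add_one, mul_neg, sum_neg_distrib, mul_sum]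
  rw [← sum_weightedRstarMob σ π f hf hmn, neg_inj]
  unfold weightedRstarMob
  rw [sum_comm]
  exact sum_congr rfl fun k _ => sum_comm

/-- For permutations `σ < π` in the classical permutation pattern order,
`μ(σ,π) = (−1)^{n−m} NE(σ,π) + ∑_{σ ≤ λ < π} μ(σ,λ) · μ(0̂,1̂ in R̂*(λ,π))`.
The Möbius function `mu` of the pattern order is characterised by its defining
recurrence. -/
theorem stmt3 {m n : ℕ} (σ : Equiv.Perm (Fin m)) (π : Equiv.Perm (Fin n))
    (mu : ∀ {a b : ℕ}, Equiv.Perm (Fin a) → Equiv.Perm (Fin b) → ℤ)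
    (hmu_self : ∀ {a : ℕ} (τ : Equiv.Perm (Fin a)), mu τ τ = 1)
    (hmu_rec : ∀ {a b : ℕ} (τ : Equiv.Perm (Fin a)) (ρ : Equiv.Perm (Fin b)),
      PermLT τ ρ →
      ∑ k ∈ Finset.range (b + 1), ∑ lam : Equiv.Perm (Fin k),
        (if PermLE τ lam ∧ PermLE lam ρ then mu τ lam else 0) = 0)
    (h : PermLT σ π) :
    mu σ π = (-1) ^ (n - m) * (permNE σ π : ℤ) +
      ∑ k ∈ Finset.range (n + 1), ∑ lam : Equiv.Perm (Fin k),
        (if PermLE σ lam ∧ PermLE lam π ∧ ¬(k = n ∧ HEq lam π) then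
          mu σ lam * mobHat (RstarP π lam) else 0) := by
  have hsplit (k : ℕ) (lam : Equiv.Perm (Fin k)) :
      (if PermLE σ lam ∧ PermLE lam π ∧ ¬(k = n ∧ HEq lam π) then
        mu σ lam * mobHat (RstarP π lam) else 0) =
      (if PermLE σ lam ∧ PermLE lam π then mu σ lam else 0) * (mobHat (RstarP π lam) + 1) -
        (if PermLE σ lam ∧ PermLE lam π then mu σ lam else 0) +
        (if k = n ∧ HEq lam π then mu σ lam else 0) := by
    by_cases htop : k = n ∧ HEq lam π
    · obtain ⟨rfl, hlam⟩ := htop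
      obtain rfl := eq_of_heq hlam
      simp [h.1, permLE_refl, mobHat_rstar_self]
    · by_cases hint : PermLE σ lam ∧ PermLE lam π
      · simp only [hint, htop, not_false_eq_true, and_self, if_true, if_false]
        ring
      · simp [hint, htop]
  simp_rw [hsplit, sum_add_distrib, sum_sub_distrib]
  have hmu : IsMobiusFrom σ fun _ lam => mu σ lam := ⟨hmu_self σ, hmu_rec σ⟩
  rw [sum_interval_mul_mobHat_rstar_add_one σ π hmu h.card_lt, hmu_rec σ π h,
    sum_range_sum_ite_heq π fun _ lam => mu σ lam]
  ring
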